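/- (Theorem LMI) Assume ν̄ᵢ > 0 for all i, W positive definite and U positive definite, and let U^{1/2} denote the positive semidefinite square root of U. The following are equivalent: (1) there exist a real n×m matrix K̄ and a real n×n matrix S̄ with S̄ ≻ 0 and φ(K̄, S̄) ≺ S̄; (2) there exist a real n×n matrix Y ≻ 0 and a real n×m matrix Z such that the symmetric block matrix P(Y,Z) is positive definite, where P(Y,Z) has block rows and columns indexed by two distinguished indices a, b and, for each subset I ⊆ {1,…,m}, two indices (I,1) (of size n) and (I,2) (of size m), with blocks P_{a,a} = Y, P_{a,b} = Y, P_{b,b} = W⁻¹, P_{a,(I,1)} = η_I (Y Aᵀ + Z N_I B), P_{a,(I,2)} = η_I Z N_I U^{1/2}, P_{(I,1),(I,1)} = Y, P_{(I,2),(I,2)} = I_m (the m×m identity), all remaining off-diagonal blocks equal to zero, and the lower-triangular blocks determined by symmetry. -/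

import Mathlib

/-!
Write `P(Y, Z) = [[Y, C], [Cᵀ, D]]` with `D = diag(W⁻¹, Y, …, Y, I, …, I) ≻ 0`. By the Schur
complement, `P ≻ 0` iff `Y - C D⁻¹ Cᵀ ≻ 0`. Substituting `Z = Y K`, one has `C = Y E` for a matrix
`E` depending only on `K`, and `E D⁻¹ Eᵀ = φ(K, Y⁻¹)` because `Σ_I η_I² = 1` and
`U^{1/2} (U^{1/2})ᵀ = U`. Hence `Y - C D⁻¹ Cᵀ = Y (Y⁻¹ - φ(K, Y⁻¹)) Y`, a congruence of
`Y⁻¹ - φ(K, Y⁻¹)`, and the two conditions correspond under `S̄ = Y⁻¹`, `K̄ = Y⁻¹ Z`.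
-/

open Matrix

/-- The scalar η_I = √(∏_{i∈I} ν̄ᵢ · ∏_{i∉I}(1−ν̄ᵢ)). -/
noncomputable def eta {m : ℕ} (ν : Fin m → ℝ) (I : Finset (Fin m)) : ℝ :=
  Real.sqrt ((∏ i ∈ I, ν i) * (∏ i ∈ Iᶜ, (1 - ν i)))

/-- The m×m diagonal 0/1 matrix N_I whose i-th diagonal entry is 1 exactly when i ∈ I. -/
def NI {m : ℕ} (I : Finset (Fin m)) : Matrix (Fin m) (Fin m) ℝ :=
  Matrix.diagonal fun i => if i ∈ I then 1 else 0

/-- φ(K,X) = Σ_{I⊆{1,…,m}} η_I² (F_I(K) X F_I(K)ᵀ + V_I(K)), where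
F_I(K) = Aᵀ + K N_I Bᵀ and V_I(K) = W + K N_I U N_I Kᵀ. -/
noncomputable def phi {m n : ℕ} (ν : Fin m → ℝ) (A W : Matrix (Fin n) (Fin n) ℝ)
    (B : Matrix (Fin n) (Fin m) ℝ) (U : Matrix (Fin m) (Fin m) ℝ)
    (K : Matrix (Fin n) (Fin m) ℝ) (X : Matrix (Fin n) (Fin n) ℝ) :
    Matrix (Fin n) (Fin n) ℝ :=
  ∑ I : Finset (Fin m), (eta ν I) ^ 2 •
    ((Aᵀ + K * NI I * Bᵀ) * X * (Aᵀ + K * NI I * Bᵀ)ᵀ + (W + K * NI I * U * NI I * Kᵀ))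

/-- M(X) = Σ_{I⊆{1,…,m}} η_I² N_I (U + Bᵀ X B) N_I. -/
noncomputable def Mop {m n : ℕ} (ν : Fin m → ℝ) (B : Matrix (Fin n) (Fin m) ℝ)
    (U : Matrix (Fin m) (Fin m) ℝ) (X : Matrix (Fin n) (Fin n) ℝ) :
    Matrix (Fin m) (Fin m) ℝ :=
  ∑ I : Finset (Fin m), (eta ν I) ^ 2 • (NI I * (U + Bᵀ * X * B) * NI I)

/-- The modified algebraic Riccati operator
Π_c(X) = Aᵀ X A + W − Aᵀ X B N̄ M(X)⁻¹ N̄ Bᵀ X A, where N̄ = diag(ν̄₁,…,ν̄ₘ). -/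
noncomputable def Pic {m n : ℕ} (ν : Fin m → ℝ) (A W : Matrix (Fin n) (Fin n) ℝ)
    (B : Matrix (Fin n) (Fin m) ℝ) (U : Matrix (Fin m) (Fin m) ℝ)
    (X : Matrix (Fin n) (Fin n) ℝ) : Matrix (Fin n) (Fin n) ℝ :=
  Aᵀ * X * A + W -
    Aᵀ * X * B * Matrix.diagonal ν * (Mop ν B U X)⁻¹ * Matrix.diagonal ν * Bᵀ * X * A

/-- The positive semidefinite square root of a positive semidefinite matrix, as defined in
the older Mathlib (removed since): `U D^{1/2} Uᴴ` from the spectral decomposition. -/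
noncomputable def Matrix.PosSemidef.sqrt {n : Type*} [Fintype n] [DecidableEq n]
    {A : Matrix n n ℝ} (hA : A.PosSemidef) : Matrix n n ℝ :=
  (hA.1.eigenvectorUnitary : Matrix n n ℝ) * diagonal ((↑) ∘ Real.sqrt ∘ hA.1.eigenvalues) *
    (star (hA.1.eigenvectorUnitary : Matrix n n ℝ))

/-- Index type for the block LMI matrix: a distinguished n-block `a`, a
distinguished n-block `b`, and for each subset I ⊆ {1,…,m} an n-block (I,1)
and an m-block (I,2); total size 2n + 2^m(n+m). -/
abbrev LMIIdx (m n : ℕ) :=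
  Fin n ⊕ (Fin n ⊕ ((Finset (Fin m) × Fin n) ⊕ (Finset (Fin m) × Fin m)))

/-- The symmetric block matrix P(Y,Z) of the LMI: blocks
P_{a,a} = Y, P_{a,b} = Y, P_{b,b} = W⁻¹,
P_{a,(I,1)} = η_I (Y Aᵀ + Z N_I Bᵀ), P_{a,(I,2)} = η_I Z N_I U^{1/2},
P_{(I,1),(I,1)} = Y, P_{(I,2),(I,2)} = I_m, all other off-diagonal blocks 0,
lower-triangular blocks determined by symmetry. -/
noncomputable def LMIMat {m n : ℕ} (ν : Fin m → ℝ)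
    (A W : Matrix (Fin n) (Fin n) ℝ) (B : Matrix (Fin n) (Fin m) ℝ)
    (Usqrt : Matrix (Fin m) (Fin m) ℝ)
    (Y : Matrix (Fin n) (Fin n) ℝ) (Z : Matrix (Fin n) (Fin m) ℝ) :
    Matrix (LMIIdx m n) (LMIIdx m n) ℝ :=
  fun p q =>
    match p, q with
    | Sum.inl i, Sum.inl j => Y i j
    | Sum.inl i, Sum.inr (Sum.inl j) => Y i j
    | Sum.inl i, Sum.inr (Sum.inr (Sum.inl (I, j))) =>
        (eta ν I • (Y * Aᵀ + Z * NI I * Bᵀ)) i j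
    | Sum.inl i, Sum.inr (Sum.inr (Sum.inr (I, j))) =>
        (eta ν I • (Z * NI I * Usqrt)) i j
    | Sum.inr (Sum.inl i), Sum.inl j => Yᵀ i j
    | Sum.inr (Sum.inl i), Sum.inr (Sum.inl j) => W⁻¹ i j
    | Sum.inr (Sum.inl _), Sum.inr (Sum.inr _) => 0
    | Sum.inr (Sum.inr (Sum.inl (I, i))), Sum.inl j =>
        (eta ν I • (Y * Aᵀ + Z * NI I * Bᵀ)ᵀ) i j
    | Sum.inr (Sum.inr (Sum.inl (I, i))), Sum.inr (Sum.inr (Sum.inl (J, j))) =>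
        if I = J then Y i j else 0
    | Sum.inr (Sum.inr (Sum.inl _)), _ => 0
    | Sum.inr (Sum.inr (Sum.inr (I, i))), Sum.inl j =>
        (eta ν I • (Z * NI I * Usqrt)ᵀ) i j
    | Sum.inr (Sum.inr (Sum.inr (I, i))), Sum.inr (Sum.inr (Sum.inr (J, j))) =>
        if I = J then (1 : Matrix (Fin m) (Fin m) ℝ) i j else 0
    | Sum.inr (Sum.inr (Sum.inr _)), _ => 0

open scoped Kronecker ComplexOrder

namespace Matrix

section BlockRow
variable {R q ι k : Type*}

def blockRow (F : ι → Matrix q k R) : Matrix q (ι × k) R :=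
  of fun i p => F p.1 i p.2

variable [CommSemiring R]

lemma mul_blockRow [Fintype q] {p : Type*} (M : Matrix p q R) (F : ι → Matrix q k R) :
    M * blockRow F = blockRow fun I => M * F I := by
  ext i ⟨I, j⟩
  simp [blockRow, mul_apply]

variable [Fintype ι] [Fintype k]

lemma blockRow_mul_one_kronecker [DecidableEq ι] (F : ι → Matrix q k R) (G : Matrix k k R) :
    blockRow F * ((1 : Matrix ι ι R) ⊗ₖ G) = blockRow fun I => F I * G := by
  ext i ⟨I, j⟩
  simp [blockRow, mul_apply, Fintype.sum_prod_type, one_apply, ite_mul]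

lemma blockRow_mul_transpose (F F' : ι → Matrix q k R) :
    blockRow F * (blockRow F')ᵀ = ∑ I, F I * (F' I)ᵀ := by
  ext i j
  simp [blockRow, mul_apply, sum_apply, Fintype.sum_prod_type]

end BlockRow

section PosDef
variable {𝕜 p r : Type*} [RCLike 𝕜] [Fintype p] [Fintype r] [DecidableEq p] [DecidableEq r]

lemma posDef_fromBlocks₂₂_iff (A : Matrix p p 𝕜) (B : Matrix p r 𝕜) {D : Matrix r r 𝕜}
    (hD : D.PosDef) : (fromBlocks A B Bᴴ D).PosDef ↔ (A - B * D⁻¹ * Bᴴ).PosDef := by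
  have := hD.isUnit.invertible
  have hdet : (fromBlocks A B Bᴴ D).det = D.det * (A - B * D⁻¹ * Bᴴ).det := by
    rw [det_fromBlocks₂₂, invOf_eq_nonsing_inv]
  constructor
  · intro h
    rw [((PosDef.fromBlocks₂₂ A B hD).1 h.posSemidef).posDef_iff_det_ne_zero]
    exact right_ne_zero_of_mul (hdet ▸ h.det_pos.ne')
  · intro h
    rw [((PosDef.fromBlocks₂₂ A B hD).2 h.posSemidef).posDef_iff_det_ne_zero, hdet]
    exact mul_ne_zero hD.det_pos.ne' h.det_pos.ne'

lemma PosDef.fromBlocks_zero {A : Matrix p p 𝕜} {D : Matrix r r 𝕜} (hA : A.PosDef)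
    (hD : D.PosDef) : (fromBlocks A 0 0 D).PosDef := by
  simpa using (posDef_fromBlocks₂₂_iff A 0 hD).2 (by simpa using hA)

lemma PosDef.mul_mul_self_iff {Y M : Matrix p p 𝕜} (hY : Y.PosDef) :
    (Y * M * Y).PosDef ↔ M.PosDef := by
  have := hY.isUnit.posDef_star_left_conjugate_iff (x := M)
  rwa [star_eq_conjTranspose, hY.1.eq] at this

end PosDef

lemma PosSemidef.sqrt_mul_transpose_sqrt {p : Type*} [Fintype p] [DecidableEq p]
    {U : Matrix p p ℝ} (hU : U.PosSemidef) : hU.sqrt * hU.sqrtᵀ = U := by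
  set V : Matrix p p ℝ := (hU.1.eigenvectorUnitary : Matrix p p ℝ)
  set D : Matrix p p ℝ := diagonal (Real.sqrt ∘ hU.1.eigenvalues)
  have hD : D * D = diagonal (RCLike.ofReal ∘ hU.1.eigenvalues) := by
    simp [D, diagonal_mul_diagonal, Real.mul_self_sqrt (hU.eigenvalues_nonneg _)]
  have hVV : star V * V = 1 := Unitary.coe_star_mul_self _
  have hVs : star V = Vᵀ := by simp [star_eq_conjTranspose]
  change V * D * star V * (V * D * star V)ᵀ = U
  calc V * D * star V * (V * D * star V)ᵀ = V * (D * D) * star V := by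
        rw [hVs] at hVV ⊢
        simp only [transpose_mul, transpose_transpose, D, diagonal_transpose]
        simp only [Matrix.mul_assoc, ← Matrix.mul_assoc Vᵀ V, hVV, Matrix.one_mul]
    _ = U := by
        rw [hD]
        exact hU.1.spectral_theorem.symm

end Matrix

lemma sum_eta_sq {m : ℕ} {ν : Fin m → ℝ} (hν : ∀ i, ν i ∈ Set.Icc (0 : ℝ) 1) :
    ∑ I, eta ν I ^ 2 = 1 := by
  have hsq (I : Finset (Fin m)) : eta ν I ^ 2 = (∏ i ∈ I, ν i) * ∏ i ∈ Iᶜ, (1 - ν i) :=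
    Real.sq_sqrt <| mul_nonneg (Finset.prod_nonneg fun i _ => (hν i).1)
      (Finset.prod_nonneg fun i _ => sub_nonneg.2 (hν i).2)
  calc ∑ I, eta ν I ^ 2
      = ∑ I ∈ Finset.univ.powerset, (∏ i ∈ I, ν i) * ∏ i ∈ Finset.univ \ I, (1 - ν i) := by
        simp only [Finset.powerset_univ, hsq, Finset.compl_eq_univ_sdiff]
    _ = ∏ i, (ν i + (1 - ν i)) := (Finset.prod_add _ _ _).symm
    _ = 1 := by simp

lemma NI_transpose {m : ℕ} (I : Finset (Fin m)) : (NI I)ᵀ = NI I :=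
  diagonal_transpose _

section LMI
variable {m n : ℕ}

abbrev LMITailIdx (m n : ℕ) :=
  Fin n ⊕ ((Finset (Fin m) × Fin n) ⊕ (Finset (Fin m) × Fin m))

def lmiDiag (m : ℕ) (P Q : Matrix (Fin n) (Fin n) ℝ) :
    Matrix (LMITailIdx m n) (LMITailIdx m n) ℝ :=
  fromBlocks P 0 0 (fromBlocks ((1 : Matrix (Finset (Fin m)) (Finset (Fin m)) ℝ) ⊗ₖ Q) 0 0 1)

lemma lmiDiag_mul_lmiDiag (P Q P' Q' : Matrix (Fin n) (Fin n) ℝ) :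
    lmiDiag m P Q * lmiDiag m P' Q' = lmiDiag m (P * P') (Q * Q') := by
  simp [lmiDiag, fromBlocks_multiply, ← mul_kronecker_mul]

lemma inv_lmiDiag {P Q : Matrix (Fin n) (Fin n) ℝ} (hP : IsUnit P.det) (hQ : IsUnit Q.det) :
    (lmiDiag m P Q)⁻¹ = lmiDiag m P⁻¹ Q⁻¹ :=
  inv_eq_right_inv <| by
    rw [lmiDiag_mul_lmiDiag, mul_nonsing_inv _ hP, mul_nonsing_inv _ hQ]
    simp [lmiDiag, fromBlocks_one]

lemma posDef_lmiDiag {P Q : Matrix (Fin n) (Fin n) ℝ} (hP : P.PosDef) (hQ : Q.PosDef) :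
    (lmiDiag m P Q).PosDef :=
  hP.fromBlocks_zero <| (PosDef.one.kronecker hQ).fromBlocks_zero PosDef.one

noncomputable def lmiFactor (ν : Fin m → ℝ) (A : Matrix (Fin n) (Fin n) ℝ)
    (B : Matrix (Fin n) (Fin m) ℝ) (Us : Matrix (Fin m) (Fin m) ℝ) (K : Matrix (Fin n) (Fin m) ℝ) :
    Matrix (Fin n) (LMITailIdx m n) ℝ :=
  fromCols 1 (fromCols (blockRow fun I => eta ν I • (Aᵀ + K * NI I * Bᵀ))
    (blockRow fun I => eta ν I • (K * NI I * Us)))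

lemma phi_eq_lmiFactor_mul {ν : Fin m → ℝ} (hν : ∀ i, ν i ∈ Set.Icc (0 : ℝ) 1)
    (A W : Matrix (Fin n) (Fin n) ℝ) (B : Matrix (Fin n) (Fin m) ℝ)
    {U Us : Matrix (Fin m) (Fin m) ℝ} (hUs : Us * Usᵀ = U)
    (K : Matrix (Fin n) (Fin m) ℝ) (X : Matrix (Fin n) (Fin n) ℝ) :
    phi ν A W B U K X = lmiFactor ν A B Us K * lmiDiag m W X * (lmiFactor ν A B Us K)ᵀ := by
  have hNU (I : Finset (Fin m)) : K * NI I * Us * (K * NI I * Us)ᵀ = K * NI I * U * NI I * Kᵀ := by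
    simp only [transpose_mul, NI_transpose, ← hUs, Matrix.mul_assoc]
  have hW : W = ∑ I, eta ν I ^ 2 • W := by rw [← Finset.sum_smul, sum_eta_sq hν, one_smul]
  simp only [lmiFactor, lmiDiag, transpose_fromCols, fromCols_mul_fromBlocks, fromCols_mul_fromRows,
    blockRow_mul_one_kronecker, blockRow_mul_transpose, Matrix.mul_one, Matrix.one_mul,
    Matrix.mul_zero, add_zero, zero_add, transpose_one]
  conv_rhs => rw [hW]
  simp only [transpose_smul, Matrix.smul_mul, Matrix.mul_smul, smul_smul, ← pow_two, hNU]
  simp only [phi, smul_add, Finset.sum_add_distrib]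
  abel

lemma LMIMat_mul_eq_fromBlocks (ν : Fin m → ℝ) (A W : Matrix (Fin n) (Fin n) ℝ)
    (B : Matrix (Fin n) (Fin m) ℝ) (Us : Matrix (Fin m) (Fin m) ℝ)
    (Y : Matrix (Fin n) (Fin n) ℝ) (K : Matrix (Fin n) (Fin m) ℝ) :
    LMIMat ν A W B Us Y (Y * K) = fromBlocks Y (Y * lmiFactor ν A B Us K)
      (Y * lmiFactor ν A B Us K)ᵀ (lmiDiag m W⁻¹ Y) := by
  simp only [lmiFactor, mul_fromCols, mul_blockRow, Matrix.mul_one, Matrix.mul_smul, Matrix.mul_add,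
    ← Matrix.mul_assoc]
  ext (i | i | ⟨I, i⟩ | ⟨I, i⟩) (j | j | ⟨J, j⟩ | ⟨J, j⟩) <;>
    simp [LMIMat, lmiDiag, blockRow, one_apply, ite_and, -transpose_add, -transpose_mul]

lemma posDef_LMIMat_mul_iff {ν : Fin m → ℝ} (hν : ∀ i, ν i ∈ Set.Icc (0 : ℝ) 1)
    (A : Matrix (Fin n) (Fin n) ℝ) {W : Matrix (Fin n) (Fin n) ℝ} (hW : W.PosDef)
    (B : Matrix (Fin n) (Fin m) ℝ) {U Us : Matrix (Fin m) (Fin m) ℝ} (hUs : Us * Usᵀ = U)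
    {Y : Matrix (Fin n) (Fin n) ℝ} (hY : Y.PosDef) (K : Matrix (Fin n) (Fin m) ℝ) :
    (LMIMat ν A W B Us Y (Y * K)).PosDef ↔ (Y⁻¹ - phi ν A W B U K Y⁻¹).PosDef := by
  have hYd : IsUnit Y.det := hY.det_pos.ne'.isUnit
  have hYt : Yᵀ = Y := (conjTranspose_eq_transpose_of_trivial Y).symm.trans hY.1.eq
  have hSchur : Y - Y * lmiFactor ν A B Us K * (lmiDiag m W⁻¹ Y)⁻¹ * (Y * lmiFactor ν A B Us K)ᵀ =
      Y * (Y⁻¹ - phi ν A W B U K Y⁻¹) * Y := by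
    rw [inv_lmiDiag hW.inv.det_pos.ne'.isUnit hYd, nonsing_inv_nonsing_inv _ hW.det_pos.ne'.isUnit,
      phi_eq_lmiFactor_mul hν A W B hUs, transpose_mul, hYt, Matrix.mul_sub, Matrix.sub_mul,
      mul_nonsing_inv _ hYd, Matrix.one_mul]
    simp only [Matrix.mul_assoc]
  rw [LMIMat_mul_eq_fromBlocks, ← conjTranspose_eq_transpose_of_trivial,
    posDef_fromBlocks₂₂_iff _ _ (posDef_lmiDiag hW.inv hY), conjTranspose_eq_transpose_of_trivial,
    hSchur, hY.mul_mul_self_iff]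

end LMI

theorem LMI_equivalence_general (m n : ℕ) (ν : Fin m → ℝ)
    (hν : ∀ i, ν i ∈ Set.Ioc (0 : ℝ) 1)
    (A W : Matrix (Fin n) (Fin n) ℝ) (B : Matrix (Fin n) (Fin m) ℝ)
    (U : Matrix (Fin m) (Fin m) ℝ) (hW : W.PosDef) (hU : U.PosDef) :
    (∃ (Kbar : Matrix (Fin n) (Fin m) ℝ) (Sbar : Matrix (Fin n) (Fin n) ℝ),
        Sbar.PosDef ∧ (Sbar - phi ν A W B U Kbar Sbar).PosDef) ↔
    (∃ (Y : Matrix (Fin n) (Fin n) ℝ) (Z : Matrix (Fin n) (Fin m) ℝ),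
        Y.PosDef ∧ (LMIMat ν A W B hU.posSemidef.sqrt Y Z).PosDef) := by
  have hν₀₁ i : ν i ∈ Set.Icc (0 : ℝ) 1 := Set.Ioc_subset_Icc_self (hν i)
  have key {Y : Matrix (Fin n) (Fin n) ℝ} (hY : Y.PosDef) := posDef_LMIMat_mul_iff hν₀₁ A hW B
    hU.posSemidef.sqrt_mul_transpose_sqrt hY
  constructor
  · rintro ⟨K, S, hS, hSK⟩
    refine ⟨S⁻¹, S⁻¹ * K, hS.inv, ?_⟩
    rwa [key hS.inv, nonsing_inv_nonsing_inv _ hS.det_pos.ne'.isUnit]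
  · rintro ⟨Y, Z, hY, hYZ⟩
    refine ⟨Y⁻¹ * Z, Y⁻¹, hY.inv, ?_⟩
    rwa [← key hY, mul_nonsing_inv_cancel_left _ _ hY.det_pos.ne'.isUnit]

/-- Theorem LMI: with ν̄ᵢ ∈ (0,1], W ≻ 0 and U ≻ 0, the following
are equivalent: (1) there exist K̄ and S̄ ≻ 0 with φ(K̄, S̄) ≺ S̄; (2) there exist
Y ≻ 0 and Z such that the block matrix P(Y,Z) (built with the positive
semidefinite square root U^{1/2} of U) is positive definite. -/
theorem LMI_equivalence (m n : ℕ) (hm : 0 < m) (hn : 0 < n) (ν : Fin m → ℝ)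
    (hν : ∀ i, ν i ∈ Set.Ioc (0 : ℝ) 1)
    (A W : Matrix (Fin n) (Fin n) ℝ) (B : Matrix (Fin n) (Fin m) ℝ)
    (U : Matrix (Fin m) (Fin m) ℝ) (hW : W.PosDef) (hU : U.PosDef) :
    (∃ (Kbar : Matrix (Fin n) (Fin m) ℝ) (Sbar : Matrix (Fin n) (Fin n) ℝ),
        Sbar.PosDef ∧ (Sbar - phi ν A W B U Kbar Sbar).PosDef) ↔
    (∃ (Y : Matrix (Fin n) (Fin n) ℝ) (Z : Matrix (Fin n) (Fin m) ℝ),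
        Y.PosDef ∧ (LMIMat ν A W B hU.posSemidef.sqrt Y Z).PosDef) :=
  LMI_equivalence_general m n ν hν A W B U hW hU
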